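/- Let s, t ∈ ℝ with 0 ≤ s ≤ 4 and t ≥ −1. Then for all P, Q ∈ Γ_n with r ≤ p_i/q_i ≤ R for all i: (1/R^{s+1}) ((R+1)/2)^{s−t−1} ((4−s)R + s) Ω_t(Q||P) ≤ ζ_s(Q||P) ≤ (1/r^{s+1}) ((r+1)/2)^{s−t−1} ((4−s)r + s) Ω_t(Q||P). -/

import Mathlib

open Real Finset

/-- Relative information of type `s` (generalized Kullback-Leibler divergence). -/
noncomputable def Phi (n : ℕ) (s : ℝ) (p q : Fin n → ℝ) : ℝ :=
  if s = 0 then ∑ i, q i * Real.log (q i / p i)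
  else if s = 1 then ∑ i, p i * Real.log (p i / q i)
  else (s * (s - 1))⁻¹ * ((∑ i, (p i) ^ s * (q i) ^ (1 - s)) - 1)

/-- Unified relative JS and AG divergence of type `s`. -/
noncomputable def Omega (n : ℕ) (s : ℝ) (p q : Fin n → ℝ) : ℝ :=
  if s = 0 then ∑ i, p i * Real.log (2 * p i / (p i + q i))
  else if s = 1 then ∑ i, ((p i + q i) / 2) * Real.log ((p i + q i) / (2 * p i))
  else (s * (s - 1))⁻¹ * ((∑ i, p i * ((p i + q i) / (2 * p i)) ^ s) - 1)

/-- Relative J-divergence of type `s`. -/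
noncomputable def zeta (n : ℕ) (s : ℝ) (p q : Fin n → ℝ) : ℝ :=
  if s = 1 then ∑ i, (p i - q i) * Real.log ((p i + q i) / (2 * q i))
  else (s - 1)⁻¹ * ∑ i, (p i - q i) * ((p i + q i) / (2 * q i)) ^ (s - 1)

/-
Both divergences are Csiszár sums over the ratios `y = pᵢ/qᵢ`:
`Ω_t(Q‖P) = ∑ qᵢ f(pᵢ/qᵢ)` and `ζ_s(Q‖P) = ∑ qᵢ g(pᵢ/qᵢ)` with `f(1) = g(1) = 0`. A computation gives
`f'' y = ((1+y)/2)^(t-2)/4 > 0` and `g'' = h · f''` with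
`h y = y^(-(s+1)) ((y+1)/2)^(s-t-1) ((4-s)y+s)`, which is antitone on `(0, ∞)` when `0 ≤ s ≤ 4` and
`t ≥ -1`. Hence `g - h(R) f` and `h(r) f - g` are convex on `[r, R]`, and Jensen's inequality with
weights `qᵢ` at the points `pᵢ/qᵢ`, whose mean is `∑ pᵢ = 1`, gives both bounds.
-/

open Set

noncomputable def powLog (s x : ℝ) : ℝ :=
  if s = 1 then log x else (s - 1)⁻¹ * x ^ (s - 1)

noncomputable def relInfoFun (t x : ℝ) : ℝ :=
  if t = 0 then -log x else if t = 1 then x * log x else (t * (t - 1))⁻¹ * (x ^ t - 1)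

lemma relInfoFun_one (t : ℝ) : relInfoFun t 1 = 0 := by
  simp [relInfoFun]

lemma hasDerivAt_powLog (s : ℝ) {x : ℝ} (hx : 0 < x) :
    HasDerivAt (powLog s) (x ^ (s - 2)) x := by
  by_cases hs : s = 1
  · have : powLog s = log := funext fun y => if_pos hs
    rw [this, hs, show (1 : ℝ) - 2 = -1 by norm_num, rpow_neg_one]
    exact hasDerivAt_log hx.ne'
  · have : powLog s = fun y => (s - 1)⁻¹ * y ^ (s - 1) := funext fun y => if_neg hs
    rw [this]
    refine ((hasDerivAt_rpow_const (Or.inl hx.ne')).const_mul (s - 1)⁻¹).congr_deriv ?_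
    rw [inv_mul_cancel_left₀ (sub_ne_zero.mpr hs)]
    ring_nf

lemma hasDerivAt_relInfoFun (t : ℝ) {x : ℝ} (hx : 0 < x) :
    HasDerivAt (relInfoFun t) (powLog t x + if t = 1 then 1 else 0) x := by
  by_cases h0 : t = 0
  · have : relInfoFun t = fun y => -log y := funext fun y => if_pos h0
    rw [this, h0]
    simpa [powLog, rpow_neg_one] using (hasDerivAt_log hx.ne').fun_neg
  by_cases h1 : t = 1
  · have : relInfoFun t = fun y => y * log y := funext fun y => by simp [relInfoFun, h1]
    rw [this, h1]
    simpa [powLog, hx.ne'] using (hasDerivAt_id' x).fun_mul (hasDerivAt_log hx.ne')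
  · have : relInfoFun t = fun y => (t * (t - 1))⁻¹ * (y ^ t - 1) :=
      funext fun y => by simp [relInfoFun, h0, h1]
    rw [this]
    refine (((hasDerivAt_rpow_const (Or.inl hx.ne')).sub_const 1).const_mul
      (t * (t - 1))⁻¹).congr_deriv ?_
    simp only [powLog, if_neg h1, add_zero]
    field_simp [sub_ne_zero.mpr h1]

noncomputable def omegaGen (t y : ℝ) : ℝ := relInfoFun t ((1 + y) / 2)

noncomputable def omegaGenDeriv (t y : ℝ) : ℝ :=
  (powLog t ((1 + y) / 2) + if t = 1 then 1 else 0) / 2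

noncomputable def zetaGen (s y : ℝ) : ℝ := (1 - y) * powLog s ((1 + y) / (2 * y))

noncomputable def zetaGenDeriv (s y : ℝ) : ℝ :=
  -powLog s ((1 + y) / (2 * y)) - (1 - y) * ((1 + y) / (2 * y)) ^ (s - 2) / (2 * y ^ 2)

lemma omegaGen_one (t : ℝ) : omegaGen t 1 = 0 := by
  simp [omegaGen, relInfoFun_one]

lemma zetaGen_one (s : ℝ) : zetaGen s 1 = 0 := by
  simp [zetaGen]

lemma hasDerivAt_one_add_div_two (y : ℝ) : HasDerivAt (fun x : ℝ => (1 + x) / 2) (1 / 2) y := by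
  simpa using ((hasDerivAt_id' y).const_add 1).div_const 2

lemma hasDerivAt_one_add_div_two_mul {y : ℝ} (hy : y ≠ 0) :
    HasDerivAt (fun x : ℝ => (1 + x) / (2 * x)) (-(2 * y ^ 2)⁻¹) y := by
  refine (((hasDerivAt_id' y).const_add 1).fun_div ((hasDerivAt_id' y).const_mul 2)
    (mul_ne_zero two_ne_zero hy)).congr_deriv ?_
  field_simp
  ring

lemma hasDerivAt_omegaGen (t : ℝ) {y : ℝ} (hy : -1 < y) :
    HasDerivAt (omegaGen t) (omegaGenDeriv t y) y := by
  have := (hasDerivAt_relInfoFun t (by linarith : 0 < (1 + y) / 2)).comp y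
    (hasDerivAt_one_add_div_two y)
  exact this.congr_deriv (by simp [omegaGenDeriv, div_eq_mul_inv, mul_comm])

lemma hasDerivAt_omegaGenDeriv (t : ℝ) {y : ℝ} (hy : -1 < y) :
    HasDerivAt (omegaGenDeriv t) (((1 + y) / 2) ^ (t - 2) / 4) y := by
  have := (((hasDerivAt_powLog t (by linarith : 0 < (1 + y) / 2)).comp y
    (hasDerivAt_one_add_div_two y)).add_const (if t = 1 then (1 : ℝ) else 0)).div_const 2
  exact this.congr_deriv (by ring)

lemma hasDerivAt_zetaGen (s : ℝ) {y : ℝ} (hy : 0 < y) :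
    HasDerivAt (zetaGen s) (zetaGenDeriv s y) y := by
  have hB : 0 < (1 + y) / (2 * y) := by positivity
  have := ((hasDerivAt_id' y).const_sub 1).fun_mul
    ((hasDerivAt_powLog s hB).comp y (hasDerivAt_one_add_div_two_mul hy.ne'))
  exact this.congr_deriv (by simp only [zetaGenDeriv, Function.comp_apply]; field_simp; ring)

lemma hasDerivAt_zetaGenDeriv (s : ℝ) {y : ℝ} (hy : 0 < y) :
    HasDerivAt (zetaGenDeriv s)
      (((1 + y) / (2 * y)) ^ (s - 3) * ((4 - s) * y + s) / (4 * y ^ 4)) y := by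
  have hB : 0 < (1 + y) / (2 * y) := by positivity
  have hB' := hasDerivAt_one_add_div_two_mul hy.ne'
  have hpow := (hasDerivAt_rpow_const (p := s - 2) (Or.inl hB.ne')).comp y hB'
  have := ((hasDerivAt_powLog s hB).comp y hB').fun_neg.fun_sub
    ((((hasDerivAt_id' y).const_sub 1).fun_mul hpow).fun_div
      (((hasDerivAt_id' y).fun_pow 2).const_mul 2) (by positivity))
  refine this.congr_deriv ?_
  have e1 : ((1 + y) / (2 * y)) ^ (s - 2) = ((1 + y) / (2 * y)) ^ (s - 3) * ((1 + y) / (2 * y)) := by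
    rw [← rpow_add_one hB.ne']; congr 1; ring
  have e2 : ((1 + y) / (2 * y)) ^ (s - 2 - 1) = ((1 + y) / (2 * y)) ^ (s - 3) := by
    congr 1; ring
  simp only [Function.comp_def, e2]
  rw [e1]
  field_simp
  ring

lemma mul_zetaGen_div {p q : ℝ} (hp : 0 < p) (hq : 0 < q) (s : ℝ) :
    q * zetaGen s (p / q) = (q - p) * powLog s ((q + p) / (2 * p)) := by
  rw [zetaGen, show (1 + p / q) / (2 * (p / q)) = (q + p) / (2 * p) by field_simp, ← mul_assoc,
    mul_one_sub, mul_div_cancel₀ p hq.ne']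

lemma omegaGen_div {p q : ℝ} (hq : 0 < q) (t : ℝ) :
    omegaGen t (p / q) = relInfoFun t ((q + p) / (2 * q)) := by
  rw [omegaGen, show (1 + p / q) / 2 = (q + p) / (2 * q) by field_simp]

lemma zeta_eq_sum_powLog (n : ℕ) (s : ℝ) (p q : Fin n → ℝ) :
    zeta n s q p = ∑ i, (q i - p i) * powLog s ((q i + p i) / (2 * p i)) := by
  by_cases hs : s = 1
  · simp [zeta, powLog, hs]
  · simp only [zeta, powLog, if_neg hs, mul_sum, mul_left_comm]

lemma Omega_eq_sum_relInfoFun (n : ℕ) (t : ℝ) (p q : Fin n → ℝ) (hq : ∀ i, 0 < q i)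
    (hq1 : ∑ i, q i = 1) :
    Omega n t q p = ∑ i, q i * relInfoFun t ((q i + p i) / (2 * q i)) := by
  by_cases h0 : t = 0
  · rw [Omega, if_pos h0]
    refine sum_congr rfl fun i _ => ?_
    rw [relInfoFun, if_pos h0, mul_neg, ← mul_neg, ← log_inv, inv_div]
  by_cases h1 : t = 1
  · rw [Omega, if_neg h0, if_pos h1]
    refine sum_congr rfl fun i _ => ?_
    have hqi := (hq i).ne'
    rw [relInfoFun, if_neg h0, if_pos h1, ← mul_assoc]
    field_simp
  · have hsum : ∑ i, q i * ((q i + p i) / (2 * q i)) ^ t - 1 =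
        ∑ i, q i * (((q i + p i) / (2 * q i)) ^ t - 1) := by
      simp only [mul_sub, mul_one, sum_sub_distrib, hq1]
    rw [Omega, if_neg h0, if_neg h1, hsum, mul_sum]
    refine sum_congr rfl fun i _ => ?_
    rw [relInfoFun, if_neg h0, if_neg h1]
    ring

lemma zeta_eq_sum_zetaGen (n : ℕ) (s : ℝ) (p q : Fin n → ℝ) (hp : ∀ i, 0 < p i)
    (hq : ∀ i, 0 < q i) : zeta n s q p = ∑ i, q i * zetaGen s (p i / q i) := by
  simp only [zeta_eq_sum_powLog, mul_zetaGen_div (hp _) (hq _)]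

lemma Omega_eq_sum_omegaGen (n : ℕ) (t : ℝ) (p q : Fin n → ℝ) (hq : ∀ i, 0 < q i)
    (hq1 : ∑ i, q i = 1) : Omega n t q p = ∑ i, q i * omegaGen t (p i / q i) := by
  simp only [Omega_eq_sum_relInfoFun n t p q hq hq1, omegaGen_div (hq _)]

noncomputable def secondDerivRatio (s t y : ℝ) : ℝ :=
  1 / y ^ (s + 1) * ((y + 1) / 2) ^ (s - t - 1) * ((4 - s) * y + s)

lemma zetaGenDeriv_deriv_eq_secondDerivRatio_mul (s t : ℝ) {y : ℝ} (hy : 0 < y) :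
    ((1 + y) / (2 * y)) ^ (s - 3) * ((4 - s) * y + s) / (4 * y ^ 4) =
      secondDerivRatio s t y * (((1 + y) / 2) ^ (t - 2) / 4) := by
  have hA : 0 < (1 + y) / 2 := by positivity
  have hsplit : ((1 + y) / 2) ^ (s - 3) = ((1 + y) / 2) ^ (s - t - 1) * ((1 + y) / 2) ^ (t - 2) := by
    rw [← rpow_add hA]; ring_nf
  have hy4 : y ^ (s + 1) = y ^ (s - 3) * y ^ 4 := by
    rw [← rpow_natCast, ← rpow_add hy]; ring_nf
  rw [secondDerivRatio, show (1 + y) / (2 * y) = ((1 + y) / 2) / y by ring,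
    div_rpow hA.le hy.le, hsplit, hy4, add_comm y 1]
  field_simp

-- Each of the three factors is nonnegative and antitone in `y` when `0 ≤ s ≤ 4` and `t ≥ -1`.
lemma secondDerivRatio_eq_mul (s t : ℝ) {y : ℝ} (hy : 0 < y) :
    secondDerivRatio s t y =
      ((1 + y) / 2) ^ (-(t + 1)) * (((1 + y⁻¹) / 2) ^ s * ((4 - s) + s * y⁻¹)) := by
  have hA : 0 < (1 + y) / 2 := by positivity
  have hsplit : ((y + 1) / 2) ^ (s - t - 1) = ((1 + y) / 2) ^ (-(t + 1)) * ((1 + y) / 2) ^ s := by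
    rw [add_comm y 1, ← rpow_add hA]; congr 1; ring
  rw [secondDerivRatio, hsplit, show (1 + y⁻¹) / 2 = ((1 + y) / 2) / y by field_simp; ring,
    div_rpow hA.le hy.le, rpow_add_one hy.ne']
  field_simp

lemma antitoneOn_secondDerivRatio {s t : ℝ} (hs0 : 0 ≤ s) (hs4 : s ≤ 4) (ht : -1 ≤ t) :
    AntitoneOn (secondDerivRatio s t) (Ioi 0) := by
  intro x (hx : 0 < x) y (hy : 0 < y) hxy
  rw [secondDerivRatio_eq_mul s t hx, secondDerivRatio_eq_mul s t hy]
  have hinv : y⁻¹ ≤ x⁻¹ := inv_anti₀ hx hxy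
  have hyinv : 0 < y⁻¹ := inv_pos.mpr hy
  refine mul_le_mul ?_ (mul_le_mul ?_ ?_ (by nlinarith) (by positivity)) (by positivity)
    (by positivity)
  · exact rpow_le_rpow_of_nonpos (by positivity) (by linarith) (by linarith)
  · exact rpow_le_rpow (by positivity) (by linarith) hs0
  · nlinarith

lemma convexOn_Icc_of_hasDerivAt₂ {r R : ℝ} {f f' f'' : ℝ → ℝ}
    (hf : ∀ y ∈ Icc r R, HasDerivAt f (f' y) y) (hf' : ∀ y ∈ Ioo r R, HasDerivAt f' (f'' y) y)
    (hf''₀ : ∀ y ∈ Ioo r R, 0 ≤ f'' y) : ConvexOn ℝ (Icc r R) f := by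
  refine convexOn_of_hasDerivWithinAt2_nonneg (f' := f') (f'' := f'') (convex_Icc r R)
    (fun y hy => (hf y hy).continuousAt.continuousWithinAt) ?_ ?_ ?_ <;> rw [interior_Icc]
  · exact fun y hy => (hf y (Ioo_subset_Icc_self hy)).hasDerivWithinAt
  · exact fun y hy => (hf' y hy).hasDerivWithinAt
  · exact hf''₀

lemma sum_mul_nonneg_of_convexOn {ι : Type*} {u : Finset ι} {D : Set ℝ} {F : ℝ → ℝ}
    (hF : ConvexOn ℝ D F) (hF1 : F 1 = 0) {w y : ι → ℝ} (hw : ∀ i ∈ u, 0 ≤ w i)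
    (hw1 : ∑ i ∈ u, w i = 1) (hy : ∀ i ∈ u, y i ∈ D) (hmean : ∑ i ∈ u, w i * y i = 1) :
    0 ≤ ∑ i ∈ u, w i * F (y i) := by
  simpa [hmean, hF1] using hF.map_sum_le hw hw1 hy

section Convexity

variable {s t r R : ℝ}

lemma convexOn_zetaGen_sub_mul_omegaGen (hr : 0 < r) {m : ℝ}
    (hm : ∀ y ∈ Ioo r R, m ≤ secondDerivRatio s t y) :
    ConvexOn ℝ (Icc r R) (fun y => zetaGen s y - m * omegaGen t y) := by
  refine convexOn_Icc_of_hasDerivAt₂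
    (fun y hy => (hasDerivAt_zetaGen s (hr.trans_le hy.1)).sub
      ((hasDerivAt_omegaGen t (by linarith [hy.1])).const_mul m))
    (fun y hy => (hasDerivAt_zetaGenDeriv s (hr.trans hy.1)).sub
      ((hasDerivAt_omegaGenDeriv t (by linarith [hy.1])).const_mul m)) fun y hy => ?_
  have hy0 : 0 < y := hr.trans hy.1
  rw [zetaGenDeriv_deriv_eq_secondDerivRatio_mul s t hy0, ← sub_mul]
  exact mul_nonneg (sub_nonneg.mpr (hm y hy)) (by positivity)

lemma convexOn_mul_omegaGen_sub_zetaGen (hr : 0 < r) {M : ℝ}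
    (hM : ∀ y ∈ Ioo r R, secondDerivRatio s t y ≤ M) :
    ConvexOn ℝ (Icc r R) (fun y => M * omegaGen t y - zetaGen s y) := by
  refine convexOn_Icc_of_hasDerivAt₂
    (fun y hy => ((hasDerivAt_omegaGen t (by linarith [hy.1])).const_mul M).sub
      (hasDerivAt_zetaGen s (hr.trans_le hy.1)))
    (fun y hy => ((hasDerivAt_omegaGenDeriv t (by linarith [hy.1])).const_mul M).sub
      (hasDerivAt_zetaGenDeriv s (hr.trans hy.1))) fun y hy => ?_
  have hy0 : 0 < y := hr.trans hy.1
  rw [zetaGenDeriv_deriv_eq_secondDerivRatio_mul s t hy0, ← sub_mul]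
  exact mul_nonneg (sub_nonneg.mpr (hM y hy)) (by positivity)

end Convexity

theorem stmt_18_general (s t : ℝ) (hs0 : 0 ≤ s) (hs4 : s ≤ 4) (ht : -1 ≤ t)
    (n : ℕ) (p q : Fin n → ℝ)
    (hp : ∀ i, 0 < p i) (hq : ∀ i, 0 < q i)
    (hp1 : ∑ i, p i = 1) (hq1 : ∑ i, q i = 1)
    (r R : ℝ) (hr : 0 < r)
    (hbound : ∀ i, r ≤ p i / q i ∧ p i / q i ≤ R) :
    (1 / R ^ (s + 1)) * ((R + 1) / 2) ^ (s - t - 1) * ((4 - s) * R + s) * Omega n t q p ≤ zeta n s q p ∧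
      zeta n s q p ≤ (1 / r ^ (s + 1)) * ((r + 1) / 2) ^ (s - t - 1) * ((4 - s) * r + s) * Omega n t q p := by
  have hanti := antitoneOn_secondDerivRatio hs0 hs4 ht
  have hmean : ∑ i, q i * (p i / q i) = 1 := by
    simpa only [mul_div_cancel₀ _ (hq _).ne'] using hp1
  have jensen (F : ℝ → ℝ) (hF : ConvexOn ℝ (Icc r R) F) (hF1 : F 1 = 0) :
      0 ≤ ∑ i, q i * F (p i / q i) :=
    sum_mul_nonneg_of_convexOn hF hF1 (fun i _ => (hq i).le) hq1 (fun i _ => hbound i) hmean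
  have lower := jensen _ (convexOn_zetaGen_sub_mul_omegaGen hr fun y hy =>
    hanti (hr.trans hy.1) (hr.trans (hy.1.trans hy.2)) hy.2.le)
    (by simp [zetaGen_one, omegaGen_one])
  have upper := jensen _ (convexOn_mul_omegaGen_sub_zetaGen hr fun y hy =>
    hanti hr (hr.trans hy.1) hy.1.le)
    (by simp [zetaGen_one, omegaGen_one])
  rw [Omega_eq_sum_omegaGen n t p q hq hq1, zeta_eq_sum_zetaGen n s p q hp hq]
  simp only [mul_sub, sum_sub_distrib, mul_left_comm (q _), ← mul_sum] at lower upper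
  exact ⟨sub_nonneg.mp lower, sub_nonneg.mp upper⟩

theorem stmt_18 (s t : ℝ) (hs0 : 0 ≤ s) (hs4 : s ≤ 4) (ht : -1 ≤ t)
    (n : ℕ) (hn : 2 ≤ n) (p q : Fin n → ℝ)
    (hp : ∀ i, 0 < p i) (hq : ∀ i, 0 < q i)
    (hp1 : ∑ i, p i = 1) (hq1 : ∑ i, q i = 1)
    (r R : ℝ) (hr : 0 < r) (hrR : r ≤ R)
    (hbound : ∀ i, r ≤ p i / q i ∧ p i / q i ≤ R) :
    (1 / R ^ (s + 1)) * ((R + 1) / 2) ^ (s - t - 1) * ((4 - s) * R + s) * Omega n t q p ≤ zeta n s q p ∧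
      zeta n s q p ≤ (1 / r ^ (s + 1)) * ((r + 1) / 2) ^ (s - t - 1) * ((4 - s) * r + s) * Omega n t q p :=
  stmt_18_general s t hs0 hs4 ht n p q hp hq hp1 hq1 r R hr hbound
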